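/- arXiv:1810.10466 — 3 statements merged into one kernel-verified Lean document; each statement's English description precedes it below -/
import Mathlib

section
/- For p = 2 (root-mean-square cost): if t* ∈ ℝ² is a global minimizer of optcost, i.e., optcost(t*) ≤ optcost(t) for all t ∈ ℝ², then there exists a point-to-point translation t₀ ∈ T with optcost(t₀) ≤ √2 · optcost(t*). -/
open scoped RealInnerProductSpace Classical

noncomputable section

/-- Points in the Euclidean plane. -/
abbrev Pt : Type := EuclideanSpace ℝ (Fin 2)

/-- A `k`-matching between `A` and `B`: a set of `k` pairs in `A × B` such that
each point of `A` and each point of `B` occurs in at most one pair. -/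
def IsMatching (A B : Finset Pt) (k : ℕ) (M : Finset (Pt × Pt)) : Prop :=
  M ⊆ A ×ˢ B ∧ M.card = k ∧
    (∀ e ∈ M, ∀ e' ∈ M, e.1 = e'.1 → e = e') ∧
    (∀ e ∈ M, ∀ e' ∈ M, e.2 = e'.2 → e = e')

/-- The `L_p`-cost of a matching `M` at translation `t`, for `p ∈ [1, ∞)`:
`((1/k) · Σ_{(a,b) ∈ M} ‖a + t − b‖^p)^(1/p)`. -/
def cost (p : ℝ) (k : ℕ) (M : Finset (Pt × Pt)) (t : Pt) : ℝ :=
  ((1 / (k : ℝ)) * ∑ e ∈ M, ‖e.1 + t - e.2‖ ^ p) ^ (1 / p)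

/-- The optimal cost at translation `t`: the minimum of `cost p k M t`
over all `k`-matchings `M` between `A` and `B`. -/
def optcost (A B : Finset Pt) (k : ℕ) (p : ℝ) (t : Pt) : ℝ :=
  sInf {c : ℝ | ∃ M : Finset (Pt × Pt), IsMatching A B k M ∧ c = cost p k M t}

/-- The set of point-to-point translations `T = {b − a : a ∈ A, b ∈ B}`. -/
def ptpTranslations (A B : Finset Pt) : Set Pt :=
  {x : Pt | ∃ a ∈ A, ∃ b ∈ B, x = b - a}


/-- The squared cost (times nothing): `(1/k) * Σ ‖a + t - b‖²` with natural power. -/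
def Qc (k : ℕ) (M : Finset (Pt × Pt)) (t : Pt) : ℝ :=
  (1 / (k : ℝ)) * ∑ e ∈ M, ‖e.1 + t - e.2‖ ^ 2

lemma Qc_nonneg (k : ℕ) (M : Finset (Pt × Pt)) (t : Pt) : 0 ≤ Qc k M t := by
  apply mul_nonneg (by positivity)
  exact Finset.sum_nonneg fun e _ => by positivity

lemma cost_two_eq (k : ℕ) (M : Finset (Pt × Pt)) (t : Pt) :
    cost 2 k M t = Real.sqrt (Qc k M t) := by
  unfold cost Qc
  rw [Real.sqrt_eq_rpow]
  congr 2
  refine Finset.sum_congr rfl fun e _ => ?_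
  rw [show (2 : ℝ) = ((2 : ℕ) : ℝ) by norm_num, Real.rpow_natCast]

lemma Qc_shift (k : ℕ) (hk : 0 < k) (M : Finset (Pt × Pt)) (hcard : M.card = k) (t : Pt) :
    Qc k M t = Qc k M ((k : ℝ)⁻¹ • ∑ e ∈ M, (e.2 - e.1))
      + ‖t - (k : ℝ)⁻¹ • ∑ e ∈ M, (e.2 - e.1)‖ ^ 2 := by
  have hk0 : (k : ℝ) ≠ 0 := Nat.cast_ne_zero.mpr hk.ne'
  set tM : Pt := (k : ℝ)⁻¹ • ∑ e ∈ M, (e.2 - e.1) with htM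
  have hsum : ∑ e ∈ M, (e.1 + tM - e.2) = 0 := by
    have h1 : ∀ e ∈ M, e.1 + tM - e.2 = (e.1 - e.2) + tM := fun e _ => by abel
    rw [Finset.sum_congr rfl h1, Finset.sum_add_distrib, Finset.sum_const, hcard,
      ← Nat.cast_smul_eq_nsmul ℝ k tM, htM, smul_smul, mul_inv_cancel₀ hk0, one_smul]
    have h2 : ∑ e ∈ M, (e.1 - e.2) = -∑ e ∈ M, (e.2 - e.1) := by
      rw [← Finset.sum_neg_distrib]
      exact Finset.sum_congr rfl fun e _ => by abel
    rw [h2]; abel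
  have hv : ∀ e ∈ M, ‖e.1 + t - e.2‖ ^ 2
      = ‖e.1 + tM - e.2‖ ^ 2 + (2 * ⟪e.1 + tM - e.2, t - tM⟫ + ‖t - tM‖ ^ 2) := by
    intro e _
    have h : e.1 + t - e.2 = (e.1 + tM - e.2) + (t - tM) := by abel
    rw [h, norm_add_sq_real]; ring
  unfold Qc
  rw [Finset.sum_congr rfl hv, Finset.sum_add_distrib, Finset.sum_add_distrib,
    ← Finset.mul_sum, ← sum_inner, hsum, inner_zero_left, Finset.sum_const, hcard,
    nsmul_eq_mul]
  field_simp
  ring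

lemma exists_matching (A B : Finset Pt) (k : ℕ) (hkA : k ≤ A.card) (hkB : k ≤ B.card) :
    ∃ M, IsMatching A B k M := by
  obtain ⟨s, hsA, hs⟩ := Finset.exists_subset_card_eq hkA
  obtain ⟨u, huB, hu⟩ := Finset.exists_subset_card_eq hkB
  have hsu : s.card = u.card := by rw [hs, hu]
  let e := Finset.equivOfCardEq hsu
  refine ⟨s.attach.image (fun (a : {x // x ∈ s}) => ((a.1, (e a).1) : Pt × Pt)), ?_, ?_, ?_, ?_⟩
  · intro x hx
    simp only [Finset.mem_image, Finset.mem_attach, true_and] at hx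
    obtain ⟨a, rfl⟩ := hx
    exact Finset.mem_product.mpr ⟨hsA a.2, huB (e a).2⟩
  · rw [Finset.card_image_of_injective _ ?_, Finset.card_attach, hs]
    intro a b hab
    have := congrArg Prod.fst hab
    exact Subtype.ext this
  · intro x hx y hy hxy
    simp only [Finset.mem_image, Finset.mem_attach, true_and] at hx hy
    obtain ⟨a, rfl⟩ := hx
    obtain ⟨b, rfl⟩ := hy
    simp only at hxy
    have : a = b := Subtype.ext hxy
    rw [this]
  · intro x hx y hy hxy
    simp only [Finset.mem_image, Finset.mem_attach, true_and] at hx hy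
    obtain ⟨a, rfl⟩ := hx
    obtain ⟨b, rfl⟩ := hy
    simp only at hxy
    have h1 : e a = e b := Subtype.ext hxy
    have : a = b := e.injective h1
    rw [this]

theorem exists_ptp_translation_sqrt_two_approx (A B : Finset Pt) (k : ℕ) (hk : 0 < k)
    (hkA : k ≤ A.card) (hkB : k ≤ B.card)
    (tstar : Pt) (hstar : ∀ t : Pt, optcost A B k 2 tstar ≤ optcost A B k 2 t) :
    ∃ t₀ ∈ ptpTranslations A B,
      optcost A B k 2 t₀ ≤ Real.sqrt 2 * optcost A B k 2 tstar := by
  classical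
  have hSfin : ∀ t : Pt,
      {c : ℝ | ∃ M : Finset (Pt × Pt), IsMatching A B k M ∧ c = cost 2 k M t}.Finite := by
    intro t
    apply Set.Finite.subset (((A ×ˢ B).powerset.finite_toSet).image (fun M => cost 2 k M t))
    rintro c ⟨M, hM, rfl⟩
    exact ⟨M, Finset.mem_powerset.mpr hM.1, rfl⟩
  obtain ⟨M₀, hM₀⟩ := exists_matching A B k hkA hkB
  have hSne : ∀ t : Pt,
      {c : ℝ | ∃ M : Finset (Pt × Pt), IsMatching A B k M ∧ c = cost 2 k M t}.Nonempty :=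
    fun t => ⟨cost 2 k M₀ t, M₀, hM₀, rfl⟩
  have hopt_le : ∀ t (M : Finset (Pt × Pt)), IsMatching A B k M →
      optcost A B k 2 t ≤ cost 2 k M t :=
    fun t M hM => csInf_le (hSfin t).bddBelow ⟨M, hM, rfl⟩
  obtain ⟨M, hM, hMt⟩ := (hSne tstar).csInf_mem (hSfin tstar)
  -- hMt : optcost A B k 2 tstar = cost 2 k M tstar (as sInf of the set)
  have hMne : M.Nonempty := Finset.card_pos.mp (hM.2.1 ▸ hk)
  have hk0 : (k : ℝ) ≠ 0 := Nat.cast_ne_zero.mpr hk.ne'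
  set tM : Pt := (k : ℝ)⁻¹ • ∑ e ∈ M, (e.2 - e.1) with htM
  have havg : ∃ e ∈ M, ‖e.1 + tM - e.2‖ ^ 2 ≤ Qc k M tM := by
    apply Finset.exists_le_of_sum_le hMne
    rw [Finset.sum_const, hM.2.1, nsmul_eq_mul]
    unfold Qc
    rw [← mul_assoc]
    field_simp
    exact le_refl _
  obtain ⟨e₀, he₀M, he₀⟩ := havg
  refine ⟨e₀.2 - e₀.1, ?_, ?_⟩
  · have hprod := Finset.mem_product.mp (hM.1 he₀M)
    exact ⟨e₀.1, hprod.1, e₀.2, hprod.2, rfl⟩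
  · have hnorm : ‖(e₀.2 - e₀.1) - tM‖ ^ 2 = ‖e₀.1 + tM - e₀.2‖ ^ 2 := by
      have h : (e₀.2 - e₀.1) - tM = -(e₀.1 + tM - e₀.2) := by abel
      rw [h, norm_neg]
    have h1 : Qc k M (e₀.2 - e₀.1) ≤ 2 * Qc k M tM := by
      rw [Qc_shift k hk M hM.2.1 (e₀.2 - e₀.1), ← htM, hnorm]
      linarith
    have h2 : Qc k M tM ≤ Qc k M tstar := by
      rw [Qc_shift k hk M hM.2.1 tstar, ← htM]
      nlinarith [sq_nonneg ‖tstar - tM‖]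
    calc optcost A B k 2 (e₀.2 - e₀.1) ≤ cost 2 k M (e₀.2 - e₀.1) := hopt_le _ _ hM
      _ = Real.sqrt (Qc k M (e₀.2 - e₀.1)) := cost_two_eq _ _ _
      _ ≤ Real.sqrt (2 * Qc k M tstar) := Real.sqrt_le_sqrt (by linarith)
      _ = Real.sqrt 2 * Real.sqrt (Qc k M tstar) := Real.sqrt_mul (by norm_num) _
      _ = Real.sqrt 2 * cost 2 k M tstar := by rw [cost_two_eq]
      _ = Real.sqrt 2 * optcost A B k 2 tstar := by rw [show optcost A B k 2 tstar = cost 2 k M tstar from hMt]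
end
end

section
/- For any p ∈ [1, ∞) and any ε with 0 < ε ≤ 1: let t ∈ ℝ², let t₀ ∈ T be the nearest neighbor of t in T (i.e., ‖t − t₀‖ = min_{t'∈T} ‖t − t'‖), and let M₀ be a k-matching with cost(M₀, t₀) = optcost(t₀). If ‖t − t₀‖ ≥ (2/ε) · optcost(t₀), then optcost(t) ≤ cost(M₀, t) ≤ (1 + ε/2) · optcost(t). -/
open scoped RealInnerProductSpace Classical

noncomputable section

lemma cost_nonneg (p : ℝ) (k : ℕ) (M : Finset (Pt × Pt)) (t : Pt) :
    0 ≤ cost p k M t := by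
  apply Real.rpow_nonneg
  apply mul_nonneg (by positivity)
  exact Finset.sum_nonneg fun e _ => Real.rpow_nonneg (norm_nonneg _) p

/-- Lipschitz in the translation. -/
lemma cost_lipschitz (p : ℝ) (hp : 1 ≤ p) (k : ℕ) (hk : 0 < k)
    (M : Finset (Pt × Pt)) (hcard : M.card = k) (t t₀ : Pt) :
    cost p k M t ≤ cost p k M t₀ + ‖t - t₀‖ := by
  have hp0 : 0 < p := lt_of_lt_of_le one_pos hp
  have hk0 : (0:ℝ) < k := Nat.cast_pos.mpr hk
  have h1 : ∑ e ∈ M, ‖e.1 + t - e.2‖ ^ p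
      ≤ ∑ e ∈ M, (‖e.1 + t₀ - e.2‖ + ‖t - t₀‖) ^ p := by
    apply Finset.sum_le_sum
    intro e _
    apply Real.rpow_le_rpow (norm_nonneg _) _ hp0.le
    have : e.1 + t - e.2 = (e.1 + t₀ - e.2) + (t - t₀) := by abel
    rw [this]
    exact norm_add_le _ _
  have h2 : (∑ e ∈ M, (‖e.1 + t₀ - e.2‖ + ‖t - t₀‖) ^ p) ^ (1/p)
      ≤ (∑ e ∈ M, ‖e.1 + t₀ - e.2‖ ^ p) ^ (1/p)
        + (∑ e ∈ M, ‖t - t₀‖ ^ p) ^ (1/p) :=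
    Real.Lp_add_le_of_nonneg (s := M) (f := fun e => ‖e.1 + t₀ - e.2‖)
      (g := fun _ => ‖t - t₀‖) hp (fun _ _ => norm_nonneg _) (fun _ _ => norm_nonneg _)
  have hconst : (∑ e ∈ M, ‖t - t₀‖ ^ p) = (k:ℝ) * ‖t - t₀‖ ^ p := by
    rw [Finset.sum_const, hcard, nsmul_eq_mul]
  unfold cost
  have hS0 : (0:ℝ) ≤ ∑ e ∈ M, ‖e.1 + t - e.2‖ ^ p :=
    Finset.sum_nonneg fun e _ => Real.rpow_nonneg (norm_nonneg _) p
  have hS1 : (0:ℝ) ≤ ∑ e ∈ M, (‖e.1 + t₀ - e.2‖ + ‖t - t₀‖) ^ p :=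
    Finset.sum_nonneg fun e _ =>
      Real.rpow_nonneg (add_nonneg (norm_nonneg _) (norm_nonneg _)) p
  have hS2 : (0:ℝ) ≤ ∑ e ∈ M, ‖e.1 + t₀ - e.2‖ ^ p :=
    Finset.sum_nonneg fun e _ => Real.rpow_nonneg (norm_nonneg _) p
  have hik : (0:ℝ) ≤ 1 / (k:ℝ) := by positivity
  calc ((1 / (k:ℝ)) * ∑ e ∈ M, ‖e.1 + t - e.2‖ ^ p) ^ (1/p)
      = (1 / (k:ℝ)) ^ (1/p) * (∑ e ∈ M, ‖e.1 + t - e.2‖ ^ p) ^ (1/p) := by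
        rw [Real.mul_rpow hik hS0]
    _ ≤ (1 / (k:ℝ)) ^ (1/p) * ((∑ e ∈ M, ‖e.1 + t₀ - e.2‖ ^ p) ^ (1/p)
          + ((k:ℝ) * ‖t - t₀‖ ^ p) ^ (1/p)) := by
        apply mul_le_mul_of_nonneg_left _ (Real.rpow_nonneg hik _)
        rw [← hconst]
        exact le_trans (Real.rpow_le_rpow hS0 h1 (by positivity)) h2
    _ = ((1 / (k:ℝ)) * ∑ e ∈ M, ‖e.1 + t₀ - e.2‖ ^ p) ^ (1/p)
          + ((1 / (k:ℝ)) * ((k:ℝ) * ‖t - t₀‖ ^ p)) ^ (1/p) := by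
        rw [mul_add, ← Real.mul_rpow hik hS2, ← Real.mul_rpow hik (by positivity)]
    _ = ((1 / (k:ℝ)) * ∑ e ∈ M, ‖e.1 + t₀ - e.2‖ ^ p) ^ (1/p) + ‖t - t₀‖ := by
        congr 1
        rw [← mul_assoc, one_div_mul_cancel (ne_of_gt hk0), one_mul,
          ← Real.rpow_mul (norm_nonneg _), mul_one_div_cancel (ne_of_gt hp0),
          Real.rpow_one]

/-- Lower bound: any matching costs at least the distance to the nearest translation. -/
lemma cost_lower (A B : Finset Pt) (p : ℝ) (hp : 1 ≤ p) (k : ℕ) (hk : 0 < k)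
    (M : Finset (Pt × Pt)) (hM : IsMatching A B k M) (t t₀ : Pt)
    (hnn : ∀ t' ∈ ptpTranslations A B, ‖t - t₀‖ ≤ ‖t - t'‖) :
    ‖t - t₀‖ ≤ cost p k M t := by
  have hp0 : 0 < p := lt_of_lt_of_le one_pos hp
  have hk0 : (0:ℝ) < k := Nat.cast_pos.mpr hk
  have key : ∀ e ∈ M, ‖t - t₀‖ ^ p ≤ ‖e.1 + t - e.2‖ ^ p := by
    intro e he
    apply Real.rpow_le_rpow (norm_nonneg _) _ hp0.le
    have hmem := hM.1 he
    rw [Finset.mem_product] at hmem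
    have ht' : (e.2 - e.1) ∈ ptpTranslations A B := ⟨e.1, hmem.1, e.2, hmem.2, rfl⟩
    have : e.1 + t - e.2 = t - (e.2 - e.1) := by abel
    rw [this]
    exact hnn _ ht'
  have hsum : (k:ℝ) * ‖t - t₀‖ ^ p ≤ ∑ e ∈ M, ‖e.1 + t - e.2‖ ^ p := by
    calc (k:ℝ) * ‖t - t₀‖ ^ p = ∑ _e ∈ M, ‖t - t₀‖ ^ p := by
          rw [Finset.sum_const, hM.2.1, nsmul_eq_mul]
      _ ≤ _ := Finset.sum_le_sum key
  have : ‖t - t₀‖ ^ p ≤ (1 / (k:ℝ)) * ∑ e ∈ M, ‖e.1 + t - e.2‖ ^ p := by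
    have h := (le_div_iff₀' hk0).mpr hsum
    calc ‖t - t₀‖ ^ p ≤ (∑ e ∈ M, ‖e.1 + t - e.2‖ ^ p) / (k:ℝ) := h
      _ = (1 / (k:ℝ)) * ∑ e ∈ M, ‖e.1 + t - e.2‖ ^ p := by ring
  calc ‖t - t₀‖ = (‖t - t₀‖ ^ p) ^ (1/p) := by
        rw [← Real.rpow_mul (norm_nonneg _), mul_one_div_cancel (ne_of_gt hp0),
          Real.rpow_one]
    _ ≤ cost p k M t :=
        Real.rpow_le_rpow (Real.rpow_nonneg (norm_nonneg _) p) this (by positivity)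

theorem far_from_nearest_translation_approx (A B : Finset Pt) (k : ℕ) (hk : 0 < k)
    (hkA : k ≤ A.card) (hkB : k ≤ B.card)
    (p : ℝ) (hp : 1 ≤ p) (ε : ℝ) (hε0 : 0 < ε) (hε1 : ε ≤ 1)
    (t t₀ : Pt) (ht₀ : t₀ ∈ ptpTranslations A B)
    (hnn : ∀ t' ∈ ptpTranslations A B, ‖t - t₀‖ ≤ ‖t - t'‖)
    (M₀ : Finset (Pt × Pt)) (hM₀ : IsMatching A B k M₀)
    (hopt : cost p k M₀ t₀ = optcost A B k p t₀)
    (hfar : (2 / ε) * optcost A B k p t₀ ≤ ‖t - t₀‖) :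
    optcost A B k p t ≤ cost p k M₀ t ∧
      cost p k M₀ t ≤ (1 + ε / 2) * optcost A B k p t := by
  set S := {c : ℝ | ∃ M : Finset (Pt × Pt), IsMatching A B k M ∧ c = cost p k M t}
  have hmem : cost p k M₀ t ∈ S := ⟨M₀, hM₀, rfl⟩
  have hbdd : BddBelow S := ⟨0, fun c hc => by
    obtain ⟨M, _, rfl⟩ := hc; exact cost_nonneg p k M t⟩
  constructor
  · exact csInf_le hbdd hmem
  · -- optcost t ≥ ‖t - t₀‖
    have hlow : ‖t - t₀‖ ≤ optcost A B k p t := by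
      apply le_csInf ⟨_, hmem⟩
      rintro c ⟨M, hM, rfl⟩
      exact cost_lower A B p hp k hk M hM t t₀ hnn
    have hopt0 : optcost A B k p t₀ ≤ (ε / 2) * ‖t - t₀‖ := by
      have := mul_le_mul_of_nonneg_left hfar (le_of_lt (by positivity : (0:ℝ) < ε / 2))
      calc optcost A B k p t₀ = (ε / 2) * ((2 / ε) * optcost A B k p t₀) := by
            field_simp
        _ ≤ (ε / 2) * ‖t - t₀‖ := this
    calc cost p k M₀ t ≤ cost p k M₀ t₀ + ‖t - t₀‖ :=
          cost_lipschitz p hp k hk M₀ hM₀.2.1 t t₀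
      _ = optcost A B k p t₀ + ‖t - t₀‖ := by rw [hopt]
      _ ≤ (ε / 2) * ‖t - t₀‖ + ‖t - t₀‖ := by linarith
      _ = (1 + ε / 2) * ‖t - t₀‖ := by ring
      _ ≤ (1 + ε / 2) * optcost A B k p t :=
          mul_le_mul_of_nonneg_left hlow (by positivity)
end
end

section
/- For any p ∈ [1, ∞) and any translation vectors t, ξ₀ ∈ ℝ² with ‖t − ξ₀‖ ≤ 3 · 2^{1/p} · optcost(t): if M₀ is a k-matching with cost(M₀, ξ₀) = optcost(ξ₀), then optcost(t) ≤ cost(M₀, t) ≤ (1 + 6 · 2^{1/p}) · optcost(t). -/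
open scoped RealInnerProductSpace Classical

noncomputable section

lemma cost_triangle (p : ℝ) (hp : 1 ≤ p) (k : ℕ) (hk : 0 < k) (M : Finset (Pt × Pt))
    (hcard : M.card = k) (t ξ : Pt) : cost p k M t ≤ cost p k M ξ + ‖t - ξ‖ := by
  have hp0 : 0 < p := lt_of_lt_of_le one_pos hp
  have hk0 : (0:ℝ) < k := Nat.cast_pos.mpr hk
  have hw : (0:ℝ) ≤ 1 / k := by positivity
  set c := ‖t - ξ‖ with hc
  have hc0 : 0 ≤ c := norm_nonneg _
  have hterm : ∀ e ∈ M, ‖e.1 + t - e.2‖ ^ p ≤ (‖e.1 + ξ - e.2‖ + c) ^ p := by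
    intro e _
    apply Real.rpow_le_rpow (norm_nonneg _) _ hp0.le
    calc ‖e.1 + t - e.2‖ = ‖(e.1 + ξ - e.2) + (t - ξ)‖ := by congr 1; abel
      _ ≤ ‖e.1 + ξ - e.2‖ + ‖t - ξ‖ := norm_add_le _ _
  have key : (∑ e ∈ M, (‖e.1 + ξ - e.2‖ + c) ^ p) ^ (1/p) ≤
      (∑ e ∈ M, ‖e.1 + ξ - e.2‖ ^ p) ^ (1/p) + (∑ e ∈ M, c ^ p) ^ (1/p) :=
    Real.Lp_add_le_of_nonneg (s := M) (f := fun e => ‖e.1 + ξ - e.2‖) (g := fun _ => c)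
      hp (fun e _ => norm_nonneg _) (fun e _ => hc0)
  have hsum_c : (∑ e ∈ M, c ^ p) = (k:ℝ) * c ^ p := by
    rw [Finset.sum_const, hcard, nsmul_eq_mul]
  have hck : ((k:ℝ) * c ^ p) ^ (1/p) = (k:ℝ) ^ (1/p) * c := by
    rw [Real.mul_rpow hk0.le (Real.rpow_nonneg hc0 p), ← Real.rpow_mul hc0,
      mul_one_div, div_self hp0.ne', Real.rpow_one]
  have hmul : ∀ S : ℝ, 0 ≤ S → ((1/(k:ℝ)) * S) ^ (1/p) = (1/(k:ℝ)) ^ (1/p) * S ^ (1/p) :=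
    fun S hS => Real.mul_rpow hw hS
  have hS1 : 0 ≤ ∑ e ∈ M, ‖e.1 + t - e.2‖ ^ p :=
    Finset.sum_nonneg fun e _ => Real.rpow_nonneg (norm_nonneg _) p
  have hS2 : 0 ≤ ∑ e ∈ M, ‖e.1 + ξ - e.2‖ ^ p :=
    Finset.sum_nonneg fun e _ => Real.rpow_nonneg (norm_nonneg _) p
  have hS3 : 0 ≤ ∑ e ∈ M, (‖e.1 + ξ - e.2‖ + c) ^ p :=
    Finset.sum_nonneg fun e _ => Real.rpow_nonneg (add_nonneg (norm_nonneg _) hc0) p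
  have hwk : (1/(k:ℝ)) ^ (1/p) * (k:ℝ) ^ (1/p) = 1 := by
    rw [← Real.mul_rpow hw hk0.le, one_div_mul_cancel hk0.ne', Real.one_rpow]
  calc cost p k M t = ((1/(k:ℝ)) * ∑ e ∈ M, ‖e.1 + t - e.2‖ ^ p) ^ (1/p) := rfl
    _ ≤ ((1/(k:ℝ)) * ∑ e ∈ M, (‖e.1 + ξ - e.2‖ + c) ^ p) ^ (1/p) := by
        apply Real.rpow_le_rpow (mul_nonneg hw hS1) _ (by positivity)
        exact mul_le_mul_of_nonneg_left (Finset.sum_le_sum hterm) hw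
    _ = (1/(k:ℝ)) ^ (1/p) * (∑ e ∈ M, (‖e.1 + ξ - e.2‖ + c) ^ p) ^ (1/p) := hmul _ hS3
    _ ≤ (1/(k:ℝ)) ^ (1/p) * ((∑ e ∈ M, ‖e.1 + ξ - e.2‖ ^ p) ^ (1/p) + (∑ e ∈ M, c ^ p) ^ (1/p)) :=
        mul_le_mul_of_nonneg_left key (Real.rpow_nonneg hw _)
    _ = cost p k M ξ + c := by
        rw [mul_add, ← hmul _ hS2, hsum_c, hck, ← mul_assoc, hwk, one_mul]
        rfl

theorem cluster_center_matching_approx (A B : Finset Pt) (k : ℕ) (hk : 0 < k)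
    (hkA : k ≤ A.card) (hkB : k ≤ B.card)
    (p : ℝ) (hp : 1 ≤ p) (t ξ₀ : Pt)
    (hclose : ‖t - ξ₀‖ ≤ 3 * (2 : ℝ) ^ (1 / p) * optcost A B k p t)
    (M₀ : Finset (Pt × Pt)) (hM₀ : IsMatching A B k M₀)
    (hopt : cost p k M₀ ξ₀ = optcost A B k p ξ₀) :
    optcost A B k p t ≤ cost p k M₀ t ∧
      cost p k M₀ t ≤ (1 + 6 * (2 : ℝ) ^ (1 / p)) * optcost A B k p t := by
  have hbdd : ∀ τ : Pt, BddBelow {c : ℝ | ∃ M, IsMatching A B k M ∧ c = cost p k M τ} := by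
    intro τ
    refine ⟨0, ?_⟩
    rintro c ⟨M, _, rfl⟩
    exact cost_nonneg p k M τ
  have hmem : ∀ τ : Pt, cost p k M₀ τ ∈ {c : ℝ | ∃ M, IsMatching A B k M ∧ c = cost p k M τ} :=
    fun τ => ⟨M₀, hM₀, rfl⟩
  have h1 : optcost A B k p t ≤ cost p k M₀ t := csInf_le (hbdd t) (hmem t)
  refine ⟨h1, ?_⟩
  have h2 : cost p k M₀ t ≤ cost p k M₀ ξ₀ + ‖t - ξ₀‖ :=
    cost_triangle p hp k hk M₀ hM₀.2.1 t ξ₀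
  have h3 : optcost A B k p ξ₀ ≤ optcost A B k p t + ‖t - ξ₀‖ := by
    have : optcost A B k p ξ₀ - ‖t - ξ₀‖ ≤ optcost A B k p t := by
      apply le_csInf ⟨_, hmem t⟩
      rintro c ⟨M, hM, rfl⟩
      have hA : optcost A B k p ξ₀ ≤ cost p k M ξ₀ := csInf_le (hbdd ξ₀) ⟨M, hM, rfl⟩
      have hB : cost p k M ξ₀ ≤ cost p k M t + ‖ξ₀ - t‖ :=
        cost_triangle p hp k hk M hM.2.1 ξ₀ t
      rw [norm_sub_rev] at hB
      linarith
    linarith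
  have hring : (1 + 6 * (2 : ℝ) ^ (1 / p)) * optcost A B k p t =
      optcost A B k p t + 2 * (3 * (2 : ℝ) ^ (1 / p) * optcost A B k p t) := by ring
  linarith [hclose, h2, h3, hopt.ge, hopt.le]
end
end
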